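/- arXiv:1502.02942 — 6 statements merged into one kernel-verified Lean document; each statement's English description precedes it below -/
import Mathlib

section
/- If B is a well-founded skipping relation (WFSK) on a transition system M, then B is a reduced well-founded skipping relation (RWFSK) on M. In particular, condition WFSK2(c) is redundant: if s → u, sBw, and for all s,u,x only WFSK2(c) ever holds along any chain of witnesses from w, a contradiction with the well-foundedness of rankl arises. -/
universe u v

section Defs

variable {S : Type u} {T : Type v}

/-- A fullpath of the transition relation `R`. -/
def FullPath (R : S → S → Prop) (σ : ℕ → S) : Prop := ∀ i, R (σ i) (σ (i+1))

/-- Strictly increasing sequences of naturals starting at 0. -/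
def IsINC (π : ℕ → ℕ) : Prop := StrictMono π ∧ π 0 = 0

/-- Every element of the i-th segment of `σ` (w.r.t. `π`) is `B`-related to the
first element of the i-th segment of `δ` (w.r.t. `ξ`). -/
def Corr (B : S → T → Prop) (σ : ℕ → S) (π : ℕ → ℕ) (δ : ℕ → T) (ξ : ℕ → ℕ) : Prop :=
  ∀ i n, π i ≤ n → n < π (i+1) → B (σ n) (δ (ξ i))

/-- `σ` matches `δ` under `B`. -/
def Match (B : S → T → Prop) (σ : ℕ → S) (δ : ℕ → T) : Prop :=
  ∃ π ξ, IsINC π ∧ IsINC ξ ∧ Corr B σ π δ ξ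

/-- Skipping simulation. -/
def IsSKS {Lbl : Type v} (R : S → S → Prop) (L : S → Lbl) (B : S → S → Prop) : Prop :=
  ∀ s w, B s w →
    L s = L w ∧
    ∀ σ, FullPath R σ → σ 0 = s → ∃ δ, FullPath R δ ∧ δ 0 = w ∧ Match B σ δ

/-- Well-founded skipping relation. -/
def IsWFSK {Lbl : Type v} (R : S → S → Prop) (L : S → Lbl) (B : S → S → Prop) : Prop :=
  (∀ s w, B s w → L s = L w) ∧
  ∃ (W : Type u) (lt : W → W → Prop) (_ : WellFounded lt)
    (rankt : S → S → W) (rankl : S → S → S → ℕ),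
    ∀ s u w, R s u → B s w →
      (∃ v, R w v ∧ B u v) ∨
      (B u w ∧ lt (rankt u w) (rankt s w)) ∨
      (∃ v, R w v ∧ B s v ∧ rankl v s u < rankl w s u) ∨
      (∃ v, (∃ x, R w x ∧ Relation.TransGen R x v) ∧ B u v)

/-- Reduced well-founded skipping relation. -/
def IsRWFSK {Lbl : Type v} (R : S → S → Prop) (L : S → Lbl) (B : S → S → Prop) : Prop :=
  (∀ s w, B s w → L s = L w) ∧
  ∃ (W : Type u) (lt : W → W → Prop) (_ : WellFounded lt) (rankt : S → S → W),
    ∀ s u w, R s u → B s w →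
      (B u w ∧ lt (rankt u w) (rankt s w)) ∨
      (∃ v, Relation.TransGen R w v ∧ B u v)

/-- Nodes of the computation tree of `R` rooted at `s`, represented as the finite
path from the root. -/
def CtreeNode (R : S → S → Prop) (s : S) (l : List S) : Prop :=
  l.head? = some s ∧ l.Chain' R

/-- Nodes of the tree `ranktCt(M,s,w)`: empty if `¬ B s w`; otherwise the largest
subtree of `ctree(M,s)` all of whose non-root nodes `⟨s,…,x⟩` satisfy `x B w` and
`¬ (x B v)` for every `v` with `w →⁺ v`. -/
def RanktCtNode (R : S → S → Prop) (B : S → S → Prop) (s w : S) (l : List S) : Prop :=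
  B s w ∧ CtreeNode R s l ∧
  ∀ x ∈ l.tail, B x w ∧ ∀ v, Relation.TransGen R w v → ¬ B x v

/-- `c` is a child of `p` in the tree with node-predicate `T'`. -/
def ChildRel (T' : List S → Prop) (c p : List S) : Prop :=
  T' c ∧ T' p ∧ ∃ v, c = p ++ [v]

-- The ordinal `size` of a node of a tree all of whose paths are finite:
-- `size(t,x) = ⋃_{c child of x} (size(t,c)+1)`.
open Classical in
noncomputable def nodeSize (T' : List S → Prop) (l : List S) : Ordinal.{u} :=
  if h : WellFounded (ChildRel T') then (h.apply l).rank else 0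

/-- `size(ranktCt(M,s,w))`: the size of the root `⟨s⟩`. -/
noncomputable def treeSize (R : S → S → Prop) (B : S → S → Prop) (s w : S) : Ordinal.{u} :=
  nodeSize (RanktCtNode R B s w) [s]

end Defs
/-!
Clause (c) of WFSK keeps `s B ·` while strictly decreasing the natural-number rank
`rankl · s u`, so following it from `w` must stop after finitely many steps at some `v` where
clause (a), (b) or (d) holds. If `v = w` this is an RWFSK clause already; otherwise `w →⁺ v`,
and each of these clauses provides a `B`-partner of `u` reachable from `v`, hence from `w` by
a nonempty path.
-/

theorem exists_reflTransGen_of_descent {α β : Type*} [LT β] [WellFoundedLT β]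
    {r : α → α → Prop} {Q G : α → Prop} (f : α → β)
    (h : ∀ a, Q a → G a ∨ ∃ b, r a b ∧ Q b ∧ f b < f a) :
    ∀ a, Q a → ∃ b, Relation.ReflTransGen r a b ∧ G b := by
  intro a
  induction a using (InvImage.wf f wellFounded_lt).induction with
  | _ a ih =>
    intro ha
    rcases h a ha with hG | ⟨b, hab, hb, hlt⟩
    · exact ⟨a, .refl, hG⟩
    · obtain ⟨c, hbc, hc⟩ := ih b hlt hb
      exact ⟨c, .head hab hbc, hc⟩

theorem rwfsk_clause_of_reflTransGen {S W : Type*} {R B : S → S → Prop} {lt : W → W → Prop}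
    {rankt : S → S → W} {s u w v : S} (hwv : Relation.ReflTransGen R w v)
    (hv : (B u v ∧ lt (rankt u v) (rankt s v)) ∨ ∃ x, Relation.TransGen R v x ∧ B u x) :
    (B u w ∧ lt (rankt u w) (rankt s w)) ∨ ∃ x, Relation.TransGen R w x ∧ B u x := by
  rcases Relation.reflTransGen_iff_eq_or_transGen.mp hwv with rfl | hwv
  · exact hv
  · rcases hv with ⟨huv, -⟩ | ⟨x, hvx, hux⟩
    · exact .inr ⟨v, hwv, huv⟩
    · exact .inr ⟨x, hwv.trans hvx, hux⟩

theorem wfsk_implies_rwfsk_general {S : Type u} {Lbl : Type v}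
    (R : S → S → Prop) (L : S → Lbl)
    (B : S → S → Prop) (h : IsWFSK R L B) : IsRWFSK R L B := by
  obtain ⟨hL, W, lt, hwf, rankt, rankl, hstep⟩ := h
  refine ⟨hL, W, lt, hwf, rankt, fun s u w hsu hsw => ?_⟩
  have hclause : ∀ v, B s v →
      ((B u v ∧ lt (rankt u v) (rankt s v)) ∨ ∃ x, Relation.TransGen R v x ∧ B u x) ∨
      ∃ x, R v x ∧ B s x ∧ rankl x s u < rankl v s u := by
    intro v hsv
    rcases hstep s u v hsu hsv with ⟨x, hvx, hux⟩ | hb | hc | ⟨x, ⟨y, hvy, hyx⟩, hux⟩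
    · exact .inl (.inr ⟨x, .single hvx, hux⟩)
    · exact .inl (.inl hb)
    · exact .inr hc
    · exact .inl (.inr ⟨x, .head hvy hyx, hux⟩)
  obtain ⟨v, hwv, hv⟩ := exists_reflTransGen_of_descent (rankl · s u) hclause w hsw
  exact rwfsk_clause_of_reflTransGen hwv hv

/-- If `B` is a WFSK on a transition system, then `B` is an RWFSK on it
(condition WFSK2(c) is redundant). -/
theorem wfsk_implies_rwfsk {S : Type u} {Lbl : Type v}
    (R : S → S → Prop) (L : S → Lbl) (hR : ∀ s, ∃ u, R s u)
    (B : S → S → Prop) (h : IsWFSK R L B) : IsRWFSK R L B :=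
  wfsk_implies_rwfsk_general R L B h
end

section
/- Soundness: If B is a reduced well-founded skipping relation (RWFSK) on a transition system M, then B is a skipping simulation (SKS) on M. -/
universe u v

/-!
Along a fullpath `σ` from `s`, the well-founded rank makes every stretch of `σ` that stays related
to the current state `w` of the simulating path finite, and right after it `σ` is related to some
`v` with `w →⁺ v`. Cutting `σ` at these points and concatenating the finite paths `w →⁺ v` gives
the matching fullpath `δ`.
-/

open Relation

theorem Relation.TransGen.exists_path {S : Type*} {R : S → S → Prop} {a b : S}
    (h : TransGen R a b) :
    ∃ (m : ℕ) (g : ℕ → S), 0 < m ∧ g 0 = a ∧ g m = b ∧ ∀ i < m, R (g i) (g (i + 1)) := by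
  induction h using TransGen.head_induction_on with
  | single hab => exact ⟨1, fun | 0 => _ | _ + 1 => b, one_pos, rfl, rfl, by simpa⟩
  | @head a c hac _ ih =>
    obtain ⟨m, g, -, hg0, hgm, hstep⟩ := ih
    refine ⟨m + 1, fun | 0 => a | i + 1 => g i, m.succ_pos, rfl, hgm, ?_⟩
    rintro (_ | i) hi
    · show R a (g 0)
      exact hg0 ▸ hac
    · exact hstep i (by omega)

namespace IsINC

variable {ξ : ℕ → ℕ}

theorem exists_segment (hξ : IsINC ξ) (j : ℕ) : ∃ n, ξ n ≤ j ∧ j < ξ (n + 1) := by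
  induction j with
  | zero => exact ⟨0, hξ.2.le, hξ.2.symm.trans_lt (hξ.1 zero_lt_one)⟩
  | succ j ih =>
    obtain ⟨n, hle, hlt⟩ := ih
    rcases (Nat.succ_le_of_lt hlt).lt_or_eq with hlt' | heq
    · exact ⟨n, by omega, hlt'⟩
    · exact ⟨n + 1, heq.ge, heq.trans_lt (hξ.1 (Nat.lt_succ_self _))⟩

theorem segment_unique (hξ : IsINC ξ) {j n n' : ℕ} (hn : ξ n ≤ j ∧ j < ξ (n + 1))
    (hn' : ξ n' ≤ j ∧ j < ξ (n' + 1)) : n = n' := by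
  have h₁ : n < n' + 1 := hξ.1.lt_iff_lt.1 (by omega)
  have h₂ : n' < n + 1 := hξ.1.lt_iff_lt.1 (by omega)
  omega

end IsINC

theorem exists_fullPath_of_transGen {S : Type*} {R : S → S → Prop} {f : ℕ → S}
    (hf : ∀ n, TransGen R (f n) (f (n + 1))) :
    ∃ δ ξ, FullPath R δ ∧ IsINC ξ ∧ ∀ n, δ (ξ n) = f n := by
  choose m g hm hg0 hgm hstep using fun n => (hf n).exists_path
  set ξ : ℕ → ℕ := fun n => ∑ i ∈ Finset.range n, m i
  have hξ_succ (n : ℕ) : ξ (n + 1) = ξ n + m n := Finset.sum_range_succ m n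
  have hξ : IsINC ξ :=
    ⟨strictMono_nat_of_lt_succ fun n => by rw [hξ_succ]; exact Nat.lt_add_of_pos_right (hm n),
      Finset.sum_range_zero m⟩
  choose seg hseg using hξ.exists_segment
  set δ : ℕ → S := fun j => g (seg j) (j - ξ (seg j))
  have hδ {n j : ℕ} (h : ξ n ≤ j ∧ j < ξ (n + 1)) : δ j = g n (j - ξ n) := by
    show g (seg j) _ = _
    rw [hξ.segment_unique (hseg j) h]
  refine ⟨δ, ξ, fun j => ?_, hξ, fun n => ?_⟩
  · obtain ⟨hle, hlt⟩ := hseg j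
    set n := seg j
    have hi : j - ξ n < m n := by rw [hξ_succ] at hlt; omega
    rw [hδ (hseg j)]
    rcases (Nat.succ_le_of_lt hlt).lt_or_eq with hlt' | heq
    · rw [hδ ⟨by omega, hlt'⟩, show j + 1 - ξ n = j - ξ n + 1 by omega]
      exact hstep n _ hi
    · rw [hδ ⟨heq.ge, heq.trans_lt (hξ.1 n.succ.lt_succ_self)⟩, heq, Nat.sub_self, hg0, ← hgm]
      have := hstep n _ hi
      rwa [show j - ξ n + 1 = m n by rw [hξ_succ] at heq; omega] at this
  · rw [hδ ⟨le_rfl, hξ.1 n.lt_succ_self⟩, Nat.sub_self, hg0]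

theorem exists_fullPath_of_invariant {α : Type*} (r : α → α → Prop) (P : α → Prop)
    (h : ∀ a, P a → ∃ b, r a b ∧ P b) {a : α} (ha : P a) :
    ∃ f : ℕ → α, f 0 = a ∧ FullPath r f := by
  choose next hnext using h
  let F : ℕ → {a // P a} := fun n => Nat.rec ⟨a, ha⟩ (fun _ x => ⟨next x.1 x.2, (hnext _ _).2⟩) n
  exact ⟨fun n => (F n).1, rfl, fun n => (hnext _ _).1⟩

/-- The rank of `(σ n, w)` decreases as long as the first alternative applies, so by
well-foundedness the second one eventually does. -/
theorem exists_transGen_of_rank {S W : Type*} {R B : S → S → Prop} {lt : W → W → Prop}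
    (hwf : WellFounded lt) {rankt : S → S → W}
    (hrank : ∀ s u w, R s u → B s w →
      (B u w ∧ lt (rankt u w) (rankt s w)) ∨ (∃ v, TransGen R w v ∧ B u v))
    {σ : ℕ → S} (hσ : FullPath R σ) {p : ℕ} {w : S} (hpw : B (σ p) w) :
    ∃ q, p < q ∧ (∀ n, p ≤ n → n < q → B (σ n) w) ∧ ∃ v, TransGen R w v ∧ B (σ q) v := by
  induction p using (InvImage.wf (fun p => rankt (σ p) w) hwf).induction with
  | _ p ih =>
  rcases hrank _ _ _ (hσ p) hpw with ⟨hB, hlt⟩ | ⟨v, hwv, hB⟩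
  · obtain ⟨q, hpq, hseg, hv⟩ := ih (p + 1) hlt hB
    refine ⟨q, by omega, fun n hpn hnq => ?_, hv⟩
    rcases hpn.lt_or_eq with h | rfl
    exacts [hseg n h hnq, hpw]
  · exact ⟨p + 1, p.lt_succ_self, fun n _ _ => by rwa [show n = p by omega], v, hwv, hB⟩

theorem rwfsk_implies_sks_general {S : Type u} {Lbl : Type v}
    (R : S → S → Prop) (L : S → Lbl)
    (B : S → S → Prop) (h : IsRWFSK R L B) : IsSKS R L B := by
  obtain ⟨hL, W, lt, hwf, rankt, hrank⟩ := h
  refine fun s w hsw => ⟨hL s w hsw, fun σ hσ hσ0 => ?_⟩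
  -- A stage `(p, v)` is the start `p` of a segment of `σ` and the state `v` it is matched with.
  obtain ⟨stage, hstage0, hstage⟩ := exists_fullPath_of_invariant
    (fun x y => x.1 < y.1 ∧ (∀ n, x.1 ≤ n → n < y.1 → B (σ n) x.2) ∧ TransGen R x.2 y.2)
    (fun x : ℕ × S => B (σ x.1) x.2)
    (fun x hx => by
      obtain ⟨q, hpq, hseg, v, hwv, hqv⟩ := exists_transGen_of_rank hwf hrank hσ hx
      exact ⟨(q, v), ⟨hpq, hseg, hwv⟩, hqv⟩)
    (a := (0, w)) (hσ0 ▸ hsw)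
  obtain ⟨δ, ξ, hδ, hξ, hδξ⟩ := exists_fullPath_of_transGen fun i => (hstage i).2.2
  refine ⟨δ, hδ, by rw [← hξ.2, hδξ, hstage0], fun i => (stage i).1, ξ,
    ⟨strictMono_nat_of_lt_succ fun i => (hstage i).1, congrArg Prod.fst hstage0⟩, hξ,
    fun i n hin hni => hδξ i ▸ (hstage i).2.1 n hin hni⟩

/-- Soundness: If `B` is an RWFSK on a transition system, then `B` is an SKS on it. -/
theorem rwfsk_implies_sks {S : Type u} {Lbl : Type v}
    (R : S → S → Prop) (L : S → Lbl) (hR : ∀ s, ∃ u, R s u)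
    (B : S → S → Prop) (h : IsRWFSK R L B) : IsSKS R L B :=
  rwfsk_implies_sks_general R L B h
end

section
/- Completeness: If B is a skipping simulation (SKS) on a transition system M, then B is a reduced well-founded skipping relation (RWFSK) on M. The witnessing rank function is rankt(s,w) = size(ranktCt(M,s,w)), valued in the ordinals below the successor cardinal of max(|S|, ω). -/
universe u v

/-!
If `s → u` and `s B w`, extend `s → u` to a fullpath and match it: either the first segment
already ends at `u`, and then `u` is related to a strict successor of `w`, or `u` lies in the first
segment and `u B w`. In the latter case, if `u` is related to no strict successor of `w`,
prefixing `s` embeds `ranktCt(M,u,w)` into the subtree of `ranktCt(M,s,w)` at the child `⟨s,u⟩`,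
so its size is strictly smaller. These trees have no infinite branch, since such a branch would be
a fullpath from `s` whose states are never related to a strict successor of `w`, while a matching
path relates the start of its second segment to one. The size of a node is at most the number of
lists over `S`, since every smaller ordinal is the size of some node.
-/

open Relation

section Paths

variable {α : Type*} {R : α → α → Prop}

theorem FullPath.transGen {σ : ℕ → α} (hσ : FullPath R σ) :
    ∀ {k : ℕ}, 0 < k → TransGen R (σ 0) (σ k)
  | 1, _ => .single (hσ 0)
  | k + 2, _ => (hσ.transGen k.succ_pos).tail (hσ (k + 1))

theorem exists_fullPath_of_rel (hR : ∀ s, ∃ u, R s u) {s u : α} (hsu : R s u) :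
    ∃ σ, FullPath R σ ∧ σ 0 = s ∧ σ 1 = u := by
  choose next hnext using hR
  refine ⟨fun | 0 => s | n + 1 => next^[n] u, ?_, rfl, rfl⟩
  rintro (_ | n)
  · exact hsu
  · simpa only [Function.iterate_succ_apply'] using hnext _

theorem exists_fullPath_of_extensions {g : ℕ → List α} {a : α} (h0 : (g 0).head? = some a)
    (hext : ∀ n, ∃ v, g (n + 1) = g n ++ [v]) (hchain : ∀ n, (g n).IsChain R) :
    ∃ σ, FullPath R σ ∧ σ 0 = a ∧ ∀ n, 0 < n → σ n ∈ (g n).tail := by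
  have hprefix : ∀ n, g n <+: g (n + 1) := fun n => by
    obtain ⟨v, hv⟩ := hext n
    exact hv ▸ List.prefix_append _ _
  have hlen : ∀ n, n < (g n).length := by
    intro n
    induction n with
    | zero => exact List.length_pos_of_ne_nil (by rintro h; simp [h] at h0)
    | succ n ih =>
      obtain ⟨v, hv⟩ := hext n
      simp only [hv, List.length_append, List.length_singleton]
      omega
  refine ⟨fun n => (g n)[n]'(hlen n), fun n => ?_, ?_, fun n hn => ?_⟩
  · dsimp only
    rw [(hprefix n).getElem (hlen n)]
    exact (hchain (n + 1)).getElem n (hlen (n + 1))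
  · simpa [List.head?_eq_getElem?, List.getElem?_eq_getElem (hlen 0)] using h0
  · obtain ⟨m, rfl⟩ := Nat.exists_eq_add_of_lt hn
    have hm : m < (g (m + 1)).tail.length := by
      have := hlen (m + 1)
      simp only [List.length_tail]
      omega
    simpa [List.getElem_tail] using List.getElem_mem hm

end Paths

section Rank

variable {α β : Type u} {r : α → α → Prop} {r' : β → β → Prop}

theorem Acc.rank_le_rank_of_map (f : α → β) (hf : ∀ a b, r a b → r' (f a) (f b)) {a : α}
    (ha : Acc r a) (hfa : Acc r' (f a)) : ha.rank ≤ hfa.rank := by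
  induction ha with
  | intro a ha ih =>
    rw [Acc.rank_eq]
    refine Ordinal.iSup_le fun ⟨b, hb⟩ => Order.succ_le_of_lt ?_
    exact (ih b hb (hfa.inv (hf b a hb))).trans_lt (hfa.rank_lt_of_rel (hf b a hb))

theorem WellFounded.card_rank_le (hwf : WellFounded r) (a : α) :
    (hwf.apply a).rank.card ≤ Cardinal.mk α := by
  have hsub : Set.Iio (hwf.apply a).rank ⊆ Set.range fun b => (hwf.apply b).rank := by
    intro o ho
    obtain ⟨b, hb, rfl⟩ := Acc.mem_range_rank_of_le (hwf.apply a) (le_of_lt ho)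
    exact ⟨b, rfl⟩
  rw [← Cardinal.lift_le.{u + 1}]
  calc Cardinal.lift (hwf.apply a).rank.card = Cardinal.mk (Set.Iio (hwf.apply a).rank) :=
        (Cardinal.mk_Iio_ordinal _).symm
    _ ≤ Cardinal.mk (Set.range fun b => (hwf.apply b).rank) := Cardinal.mk_le_mk_of_subset hsub
    _ ≤ Cardinal.lift (Cardinal.mk α) :=
        (Cardinal.lift_id'.{u, u + 1} _).symm.trans_le Cardinal.mk_range_le_lift

end Rank

theorem nodeSize_eq_rank {S : Type u} {T : List S → Prop} (hwf : WellFounded (ChildRel T))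
    (l : List S) : nodeSize T l = (hwf.apply l).rank :=
  dif_pos hwf

section Skipping

variable {S : Type u} {Lbl : Type v} {R : S → S → Prop} {L : S → Lbl} {B : S → S → Prop}

theorem isRWFSK_of_rank {W : Type*} [Preorder W] [WellFoundedLT W]
    (hL : ∀ s w, B s w → L s = L w) (rank : S → S → W)
    (hrank : ∀ s u w, R s u → B s w →
      (B u w ∧ rank u w < rank s w) ∨ ∃ v, TransGen R w v ∧ B u v) :
    IsRWFSK R L B :=
  ⟨hL, S × S, InvImage (· < ·) fun p => rank p.1 p.2, InvImage.wf _ wellFounded_lt,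
    Prod.mk, hrank⟩

/-- `m` is where the second segment of a path matching `σ` begins. -/
theorem IsSKS.exists_first_skip (h : IsSKS R L B) {s w : S} (hsw : B s w) {σ : ℕ → S}
    (hσ : FullPath R σ) (h0 : σ 0 = s) :
    ∃ m, 0 < m ∧ (∀ n < m, B (σ n) w) ∧ ∃ v, TransGen R w v ∧ B (σ m) v := by
  obtain ⟨δ, hδ, hδ0, π, ξ, ⟨hπ, hπ0⟩, ⟨hξ, hξ0⟩, hcorr⟩ := (h s w hsw).2 σ hσ h0
  have hπ1 : 0 < π 1 := hπ0 ▸ hπ Nat.one_pos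
  refine ⟨π 1, hπ1, fun n hn => ?_, δ (ξ 1), hδ0 ▸ hδ.transGen (hξ0 ▸ hξ Nat.one_pos), ?_⟩
  · simpa [hξ0, hδ0] using hcorr 0 n (by simp [hπ0]) hn
  · exact hcorr 1 (π 1) le_rfl (hπ Nat.one_lt_two)

theorem IsSKS.rel_or_skip (h : IsSKS R L B) (hR : ∀ s, ∃ u, R s u) {s u w : S}
    (hsu : R s u) (hsw : B s w) : B u w ∨ ∃ v, TransGen R w v ∧ B u v := by
  obtain ⟨σ, hσ, hσ0, hσ1⟩ := exists_fullPath_of_rel hR hsu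
  obtain ⟨m, hm, hbefore, hskip⟩ := h.exists_first_skip hsw hσ hσ0
  rcases (Nat.one_le_iff_ne_zero.mpr hm.ne').eq_or_lt with rfl | hlt
  · exact .inr (hσ1 ▸ hskip)
  · exact .inl (hσ1 ▸ hbefore 1 hlt)

theorem IsSKS.wellFounded_childRel (h : IsSKS R L B) (s w : S) :
    WellFounded (ChildRel (RanktCtNode R B s w)) := by
  rw [wellFounded_iff_isEmpty_descending_chain]
  refine ⟨fun ⟨g, hg⟩ => ?_⟩
  have hnode n : RanktCtNode R B s w (g n) := (hg n).2.1
  obtain ⟨σ, hσ, hσ0, hσtail⟩ := exists_fullPath_of_extensions (hnode 0).2.1.1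
    (fun n => (hg n).2.2) (fun n => (hnode n).2.1.2)
  obtain ⟨m, hm, -, v, hwv, hmv⟩ := h.exists_first_skip (hnode 0).1 hσ hσ0
  exact ((hnode m).2.2 _ (hσtail m hm)).2 v hwv hmv

theorem RanktCtNode.singleton {s w : S} (hsw : B s w) : RanktCtNode R B s w [s] :=
  ⟨hsw, ⟨rfl, List.isChain_singleton s⟩, by simp⟩

theorem RanktCtNode.cons {s u w : S} (hsu : R s u) (hsw : B s w) (huw : B u w)
    (hskip : ∀ v, TransGen R w v → ¬ B u v) {l : List S} (hl : RanktCtNode R B u w l) :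
    RanktCtNode R B s w (s :: l) := by
  obtain ⟨-, ⟨hhead, hchain⟩, htail⟩ := hl
  obtain ⟨t, rfl⟩ : ∃ t, l = u :: t := by
    cases l <;> simp_all
  refine ⟨hsw, ⟨rfl, List.isChain_cons_cons.mpr ⟨hsu, hchain⟩⟩, ?_⟩
  rintro x (_ | ⟨_, hx⟩)
  exacts [⟨huw, hskip⟩, htail x hx]

theorem IsSKS.treeSize_lt_or_skip (h : IsSKS R L B) (hR : ∀ s, ∃ u, R s u) {s u w : S}
    (hsu : R s u) (hsw : B s w) :
    (B u w ∧ treeSize R B u w < treeSize R B s w) ∨ ∃ v, TransGen R w v ∧ B u v := by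
  by_cases hskip : ∃ v, TransGen R w v ∧ B u v
  · exact .inr hskip
  simp only [not_exists, not_and] at hskip
  have huw := (h.rel_or_skip hR hsu hsw).resolve_right fun ⟨v, hwv, huv⟩ => hskip v hwv huv
  refine .inl ⟨huw, ?_⟩
  have hwfu := h.wellFounded_childRel u w
  have hwfs := h.wellFounded_childRel s w
  have hmap : ∀ c p, ChildRel (RanktCtNode R B u w) c p →
      ChildRel (RanktCtNode R B s w) (s :: c) (s :: p) := by
    rintro c p ⟨hc, hp, v, rfl⟩
    exact ⟨.cons hsu hsw huw hskip hc, .cons hsu hsw huw hskip hp, v, rfl⟩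
  have hchild : ChildRel (RanktCtNode R B s w) [s, u] [s] :=
    ⟨.cons hsu hsw huw hskip (.singleton huw), .singleton hsw, u, rfl⟩
  unfold treeSize
  rw [nodeSize_eq_rank hwfu, nodeSize_eq_rank hwfs]
  calc (hwfu.apply [u]).rank ≤ (hwfs.apply [s, u]).rank :=
        Acc.rank_le_rank_of_map (List.cons s) hmap _ _
    _ < (hwfs.apply [s]).rank := (hwfs.apply [s]).rank_lt_of_rel hchild

theorem card_treeSize_le (h : IsSKS R L B) (s w : S) :
    (treeSize R B s w).card ≤ max (Cardinal.mk S) Cardinal.aleph0 := by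
  have : Nonempty S := ⟨s⟩
  have hwf := h.wellFounded_childRel s w
  rw [treeSize, nodeSize_eq_rank hwf, ← Cardinal.mk_list_eq_max_mk_aleph0]
  exact hwf.card_rank_le [s]

end Skipping

/-- Completeness: If `B` is an SKS, then `B` is an RWFSK; the witnessing
rank function is `rankt(s,w) = size(ranktCt(M,s,w))`, valued in the ordinals below the
successor cardinal of `max(|S|, ℵ₀)` (i.e. of cardinality at most `max(|S|, ℵ₀)`). -/
theorem sks_implies_rwfsk {S : Type u} {Lbl : Type v}
    (R : S → S → Prop) (L : S → Lbl) (hR : ∀ s, ∃ u, R s u)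
    (B : S → S → Prop) (h : IsSKS R L B) :
    IsRWFSK R L B ∧
    (∀ s u w, R s u → B s w →
      (B u w ∧ treeSize R B u w < treeSize R B s w) ∨
      (∃ v, Relation.TransGen R w v ∧ B u v)) ∧
    (∀ s w, (treeSize R B s w).card ≤ max (Cardinal.mk S) Cardinal.aleph0) := by
  have hstep s u w (hsu : R s u) (hsw : B s w) := h.treeSize_lt_or_skip hR hsu hsw
  exact ⟨isRWFSK_of_rank (fun s w hsw => (h s w hsw).1) (treeSize R B) hstep, hstep,
    card_treeSize_le h⟩
end

section
/- Every path in the tree ranktCt(M,s,w) is finite, when B is a skipping simulation on M. -/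
universe u v

/-! A descending chain of children in `ranktCt(M,s,w)` adds one state at a time, so the added
states form a fullpath `σ` starting from a state related to `w`. Matching `σ` against some
fullpath `δ` from `w` relates a state of `σ` to a state of `δ` strictly after `w`, which no
non-root node of `ranktCt(M,s,w)` may be. -/

section RanktCt

variable {S : Type u} {R B : S → S → Prop}

theorem FullPath.transGen_of_pos {δ : ℕ → S} (hδ : FullPath R δ) :
    ∀ {k : ℕ}, 0 < k → Relation.TransGen R (δ 0) (δ k)
  | 1, _ => .single (hδ 0)
  | k + 2, _ => (hδ.transGen_of_pos k.succ_pos).tail (hδ (k + 1))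

theorem Match.exists_rel_of_pos {T : Type v} {B : S → T → Prop} {σ : ℕ → S} {δ : ℕ → T}
    (hm : Match B σ δ) : ∃ n k, 0 < k ∧ B (σ n) (δ k) := by
  obtain ⟨π, ξ, hπ, hξ, hcorr⟩ := hm
  exact ⟨π 1, ξ 1, hξ.2 ▸ hξ.1 Nat.zero_lt_one, hcorr 1 (π 1) le_rfl (hπ.1 Nat.one_lt_two)⟩

theorem IsSKS.exists_rel_transGen {Lbl : Type v} {L : S → Lbl} (hB : IsSKS R L B)
    {σ : ℕ → S} (hσ : FullPath R σ) {w : S} (h0 : B (σ 0) w) :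
    ∃ n v, Relation.TransGen R w v ∧ B (σ n) v := by
  obtain ⟨δ, hδ, hδ0, hm⟩ := (hB _ w h0).2 σ hσ rfl
  obtain ⟨n, k, hk, hnk⟩ := hm.exists_rel_of_pos
  exact ⟨n, δ k, hδ0 ▸ hδ.transGen_of_pos hk, hnk⟩

theorem fullPath_of_append_singleton {f : ℕ → List S} {σ : ℕ → S}
    (hchain : ∀ n, (f n).IsChain R) (hf : ∀ n, f (n + 1) = f n ++ [σ n]) : FullPath R σ := by
  intro n
  have h := hchain (n + 2)
  rw [hf (n + 1), hf n, List.isChain_append] at h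
  exact h.2.2 _ (by simp) _ rfl

theorem CtreeNode.ne_nil {s : S} {l : List S} (hl : CtreeNode R s l) : l ≠ [] := by
  rintro rfl
  exact absurd hl.1 (by simp)

theorem RanktCtNode.rel_of_append_singleton {s w x : S} {l : List S}
    (hl : RanktCtNode R B s w l) (hlx : RanktCtNode R B s w (l ++ [x])) :
    B x w ∧ ∀ v, Relation.TransGen R w v → ¬ B x v := by
  refine hlx.2.2 x ?_
  obtain ⟨a, t, rfl⟩ := List.exists_cons_of_ne_nil hl.2.1.ne_nil
  simp

end RanktCt

theorem ranktCt_paths_finite_general {S : Type u} {Lbl : Type v}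
    (R : S → S → Prop) (L : S → Lbl)
    (B : S → S → Prop) (h : IsSKS R L B) (s w : S) :
    ¬ ∃ f : ℕ → List S, ∀ n, ChildRel (RanktCtNode R B s w) (f (n+1)) (f n) := by
  rintro ⟨f, hf⟩
  choose σ hσ using fun n => (hf n).2.2
  have hnode (n : ℕ) : RanktCtNode R B s w (f n) := (hf n).2.1
  have hrel (n : ℕ) : B (σ n) w ∧ ∀ v, Relation.TransGen R w v → ¬ B (σ n) v :=
    (hnode n).rel_of_append_singleton (hσ n ▸ hnode (n + 1))
  have hpath : FullPath R σ := fullPath_of_append_singleton (fun n => (hnode n).2.1.2) hσ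
  obtain ⟨n, v, hwv, hnv⟩ := h.exists_rel_transGen hpath (hrel 0).1
  exact (hrel n).2 v hwv hnv

/-- Every path of `ranktCt(M,s,w)` is finite (there is no infinite
descending chain of children), when `B` is a skipping simulation on `M`. -/
theorem ranktCt_paths_finite {S : Type u} {Lbl : Type v}
    (R : S → S → Prop) (L : S → Lbl) (hR : ∀ s, ∃ u, R s u)
    (B : S → S → Prop) (h : IsSKS R L B) (s w : S) :
    ¬ ∃ f : ℕ → List S, ∀ n, ChildRel (RanktCtNode R B s w) (f (n+1)) (f n) :=
  ranktCt_paths_finite_general R L B h s w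
end

section
/- If a concrete system is a skipping refinement of an abstract system via refinement map r, then for every fullpath σ of the concrete system there exists a fullpath δ of the abstract system starting at some state with the same label as r(σ(0)), such that every concrete state along σ has (via r) the same label as its matched abstract state. -/
universe u v

section Refinement

variable {C A : Type u} {Lbl : Type v}

/-- Disjoint-union transition relation `→_C ⊎ →_A`. -/
def SumRel (RC : C → C → Prop) (RA : A → A → Prop) : C ⊕ A → C ⊕ A → Prop
  | Sum.inl x, Sum.inl y => RC x y
  | Sum.inr x, Sum.inr y => RA x y
  | _, _ => False

/-- Labeling of the disjoint union: `𝓛(s) = L_A(s)` on abstract states and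
`𝓛(s) = L_A(r.s)` on concrete states. -/
def SumLabel (r : C → A) (LA : A → Lbl) : C ⊕ A → Lbl
  | Sum.inl c => LA (r c)
  | Sum.inr a => LA a

/-- Lift `B ⊆ S_C × S_A` to the disjoint union. -/
def LiftRel (B : C → A → Prop) : C ⊕ A → C ⊕ A → Prop
  | Sum.inl c, Sum.inr a => B c a
  | _, _ => False

/-- `M_C ≲_r M_A`: skipping refinement with respect to refinement map `r`. -/
def SkipRefinement (RC : C → C → Prop) (RA : A → A → Prop) (LA : A → Lbl) (r : C → A) : Prop :=
  ∃ B : C → A → Prop, (∀ s, B s (r s)) ∧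
    IsSKS (SumRel RC RA) (SumLabel r LA) (LiftRel B)

end Refinement

/-! Take the abstract witness that the SKS condition gives for the related pair `(σ 0, r (σ 0))` of the
disjoint union: since `SumRel` has no transitions between the components it never leaves the abstract
side, and `B`-related states have equal labels. -/

theorem Match.mono {S T : Type*} {B B' : S → T → Prop} (hB : ∀ s t, B s t → B' s t)
    {σ : ℕ → S} {δ : ℕ → T} (h : Match B σ δ) : Match B' σ δ := by
  obtain ⟨π, ξ, hπ, hξ, hcorr⟩ := h
  exact ⟨π, ξ, hπ, hξ, fun i n h₁ h₂ => hB _ _ (hcorr i n h₁ h₂)⟩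

theorem IsSKS.label_eq {S : Type u} {Lbl : Type v} {R : S → S → Prop} {L : S → Lbl}
    {B : S → S → Prop} (h : IsSKS R L B) {s w : S} (hsw : B s w) : L s = L w :=
  (h s w hsw).1

section DisjointUnion

variable {C A : Type u} {RC : C → C → Prop} {RA : A → A → Prop}

theorem exists_eq_inr_of_sumRel_inr {a : A} {x : C ⊕ A} (h : SumRel RC RA (Sum.inr a) x) :
    ∃ b, x = Sum.inr b := by
  cases x with
  | inl c => exact h.elim
  | inr b => exact ⟨b, rfl⟩

theorem FullPath.exists_eq_comp_inr {δ : ℕ → C ⊕ A} (hδ : FullPath (SumRel RC RA) δ) {a : A}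
    (h₀ : δ 0 = Sum.inr a) : ∃ δA : ℕ → A, FullPath RA δA ∧ δA 0 = a ∧ δ = Sum.inr ∘ δA := by
  have hinr : ∀ n, ∃ b, δ n = Sum.inr b := by
    intro n
    induction n with
    | zero => exact ⟨a, h₀⟩
    | succ n ih =>
      obtain ⟨b, hb⟩ := ih
      exact exists_eq_inr_of_sumRel_inr (hb ▸ hδ n)
  choose δA hδA using hinr
  have hδ_eq : δ = Sum.inr ∘ δA := funext hδA
  subst hδ_eq
  exact ⟨δA, hδ, Sum.inr_injective h₀, rfl⟩

theorem SkipRefinement.exists_match {Lbl : Type v} {LA : A → Lbl} {r : C → A}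
    (href : SkipRefinement RC RA LA r) {σ : ℕ → C} (hσ : FullPath RC σ) :
    ∃ δ : ℕ → A, FullPath RA δ ∧ δ 0 = r (σ 0) ∧
      Match (fun c a => LA (r c) = LA a) σ δ := by
  obtain ⟨B, hBr, hSKS⟩ := href
  obtain ⟨δ', hδ', hδ'₀, hmatch⟩ :=
    (hSKS (Sum.inl (σ 0)) (Sum.inr (r (σ 0))) (hBr (σ 0))).2 (Sum.inl ∘ σ) hσ rfl
  obtain ⟨δ, hδ, hδ₀, rfl⟩ := hδ'.exists_eq_comp_inr hδ'₀
  have hlabel (c : C) (a : A) (hca : B c a) : LA (r c) = LA a :=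
    hSKS.label_eq (s := Sum.inl c) (w := Sum.inr a) hca
  exact ⟨δ, hδ, hδ₀, hmatch.mono hlabel⟩

end DisjointUnion

theorem skip_refinement_label_match_general {C A : Type u} {Lbl : Type v}
    (RC : C → C → Prop) (RA : A → A → Prop) (LA : A → Lbl) (r : C → A)
    (href : SkipRefinement RC RA LA r) :
    ∀ σ : ℕ → C, FullPath RC σ →
      ∃ δ : ℕ → A, FullPath RA δ ∧ LA (δ 0) = LA (r (σ 0)) ∧
        Match (fun (c : C) (a : A) => LA (r c) = LA a) σ δ := by
  intro σ hσ
  obtain ⟨δ, hδ, hδ₀, hmatch⟩ := href.exists_match hσ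
  exact ⟨δ, hδ, congrArg LA hδ₀, hmatch⟩

/-- If `M_C ≲_r M_A`, then every fullpath of the concrete system is
matched by a fullpath of the abstract system starting at a state with the same
label as `r(σ(0))`, such that every concrete state along `σ` has (via `r`) the
same label as its matched abstract state. -/
theorem skip_refinement_label_match {C A : Type u} {Lbl : Type v}
    (RC : C → C → Prop) (RA : A → A → Prop) (LA : A → Lbl) (r : C → A)
    (hRC : ∀ s, ∃ u, RC s u) (hRA : ∀ s, ∃ u, RA s u)
    (href : SkipRefinement RC RA LA r) :
    ∀ σ : ℕ → C, FullPath RC σ →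
      ∃ δ : ℕ → A, FullPath RA δ ∧ LA (δ 0) = LA (r (σ 0)) ∧
        Match (fun (c : C) (a : A) => LA (r c) = LA a) σ δ :=
  skip_refinement_label_match_general RC RA LA r href
end

section
/- Skipping refinement is transitive when refinement maps compose: if M_C ≲_{r₁} M_B via the disjoint-union SKS construction and M_B ≲_{r₂} M_A, then M_C ≲_{r₂∘r₁} M_A. -/
universe u v

/-!
A match of `σ` against `δ` is the same as a monotone, unbounded reindexing `f` with `f 0 = 0`
relating `σ n` to `δ (f n)`: `f` sends each segment of `σ` to the first index of the matching
segment of `δ`. Reindexings compose, so matches compose; and a skipping simulation on the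
disjoint union is the same as a relation between the two systems along whose fullpaths matches
exist, since fullpaths never leave the summand they start in.
-/

open Filter

namespace IsINC

theorem exists_mem_segment {π : ℕ → ℕ} (hπ : IsINC π) (n : ℕ) :
    ∃ i, π i ≤ n ∧ n < π (i + 1) := by
  classical
  refine ⟨Nat.findGreatest (π · ≤ n) n, Nat.findGreatest_spec (P := (π · ≤ n)) n.zero_le
    (by simp only [hπ.2, zero_le]), ?_⟩
  by_contra! hle
  by_cases hn : Nat.findGreatest (π · ≤ n) n + 1 ≤ n
  · exact Nat.findGreatest_is_greatest (Nat.lt_succ_self _) hn hle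
  · exact hn ((hπ.1.le_apply).trans hle)

end IsINC

section Match

variable {S T U : Type*} {σ : ℕ → S} {δ : ℕ → T}

theorem Match.exists_reindex {B : S → T → Prop} (h : Match B σ δ) :
    ∃ f : ℕ → ℕ, Monotone f ∧ f 0 = 0 ∧ Tendsto f atTop atTop ∧ ∀ n, B (σ n) (δ (f n)) := by
  obtain ⟨π, ξ, hπ, hξ, hcorr⟩ := h
  choose seg hseg_ge hseg_lt using hπ.exists_mem_segment
  have seg_le {i j n : ℕ} (hi : π i ≤ n) (hj : n < π (j + 1)) : i ≤ j :=
    Nat.lt_succ_iff.1 (hπ.1.lt_iff_lt.1 (hi.trans_lt hj))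
  have hseg_mono : Monotone seg := fun m n hmn => seg_le ((hseg_ge m).trans hmn) (hseg_lt n)
  refine ⟨ξ ∘ seg, hξ.1.monotone.comp hseg_mono, ?_, ?_, fun n => hcorr _ n (hseg_ge n) (hseg_lt n)⟩
  · have : seg 0 = 0 := Nat.le_zero.1 (seg_le (hseg_ge 0) (by simpa [hπ.2] using hπ.1 Nat.one_pos))
    simp [this, hξ.2]
  · refine hξ.1.tendsto_atTop.comp (tendsto_atTop_atTop_of_monotone hseg_mono fun i => ⟨π i, ?_⟩)
    exact seg_le le_rfl (hseg_lt (π i))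

theorem match_of_reindex {B : S → T → Prop} {f : ℕ → ℕ} (hf : Monotone f) (hf0 : f 0 = 0)
    (hf_top : Tendsto f atTop atTop) (hB : ∀ n, B (σ n) (δ (f n))) : Match B σ δ := by
  classical
  have hinf : (Set.range f).Infinite :=
    Set.infinite_of_not_bddAbove (not_bddAbove_of_tendsto_atTop hf_top)
  -- `ξ` enumerates the values of `f`, and `π i` is the first time `f` reaches `ξ i`.
  set ξ := Nat.nth (· ∈ Set.range f)
  have hξ : StrictMono ξ := Nat.nth_strictMono hinf
  have hξ_mem (i : ℕ) : ∃ n, f n = ξ i := Nat.nth_mem_of_infinite hinf i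
  let π i := Nat.find (hξ_mem i)
  have hfπ (i : ℕ) : f (π i) = ξ i := Nat.find_spec (hξ_mem i)
  have hξ0 : ξ 0 = 0 := Nat.nth_zero_of_zero ⟨0, hf0⟩
  refine ⟨π, ξ, ⟨fun i j hij => lt_of_not_ge fun hji => ?_, ?_⟩, ⟨hξ, hξ0⟩, ?_⟩
  · exact (hξ hij).not_ge (by simpa only [hfπ] using hf hji)
  · exact Nat.le_zero.1 (Nat.find_min' _ (hf0.trans hξ0.symm))
  · intro i n hin hni
    obtain ⟨k, -, hk⟩ := Nat.exists_lt_card_nth_eq (Set.mem_range_self (f := f) n)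
    change ξ k = f n at hk
    have hik : ξ i ≤ ξ k := by rw [hk, ← hfπ i]; exact hf hin
    have hki : ξ k < ξ (i + 1) := by
      refine lt_of_le_of_ne (by rw [hk, ← hfπ (i + 1)]; exact hf hni.le) fun heq => ?_
      exact Nat.find_min (hξ_mem (i + 1)) hni (hk.symm.trans heq)
    obtain rfl : k = i := by
      have := hξ.lt_iff_lt.1 hki
      have := hξ.le_iff_le.1 hik
      omega
    rw [hk]
    exact hB n

theorem Match.comp {B₁ : S → T → Prop} {B₂ : T → U → Prop} {ε : ℕ → U}
    (h₁ : Match B₁ σ δ) (h₂ : Match B₂ δ ε) : Match (Relation.Comp B₁ B₂) σ ε := by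
  obtain ⟨f, hf, hf0, hf_top, hB₁⟩ := h₁.exists_reindex
  obtain ⟨g, hg, hg0, hg_top, hB₂⟩ := h₂.exists_reindex
  exact match_of_reindex (hg.comp hf) (by simp [hf0, hg0]) (hg_top.comp hf_top)
    fun n => ⟨δ (f n), hB₁ n, hB₂ (f n)⟩

end Match

theorem FullPath.exists_eq_comp {S T : Type*} {R : S → S → Prop} {σ : ℕ → S} (hσ : FullPath R σ)
    {f : T → S} (hf : ∀ t s, R (f t) s → ∃ t', s = f t') {t₀ : T} (h0 : σ 0 = f t₀) :
    ∃ τ : ℕ → T, σ = f ∘ τ := by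
  have hmem (n : ℕ) : ∃ t, σ n = f t := by
    induction n with
    | zero => exact ⟨t₀, h0⟩
    | succ n ih =>
      obtain ⟨t, ht⟩ := ih
      exact hf t _ (ht ▸ hσ n)
  choose τ hτ using hmem
  exact ⟨τ, funext hτ⟩

def IsSkipSimulation {C A : Type*} {Lbl : Type*} (RC : C → C → Prop) (RA : A → A → Prop)
    (LC : C → Lbl) (LA : A → Lbl) (B : C → A → Prop) : Prop :=
  ∀ c a, B c a → LC c = LA a ∧
    ∀ σ, FullPath RC σ → σ 0 = c → ∃ δ, FullPath RA δ ∧ δ 0 = a ∧ Match B σ δ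

theorem IsSkipSimulation.comp {C B' A : Type*} {Lbl : Type*} {RC : C → C → Prop}
    {RB : B' → B' → Prop} {RA : A → A → Prop} {LC : C → Lbl} {LB : B' → Lbl} {LA : A → Lbl}
    {B₁ : C → B' → Prop} {B₂ : B' → A → Prop}
    (h₁ : IsSkipSimulation RC RB LC LB B₁) (h₂ : IsSkipSimulation RB RA LB LA B₂) :
    IsSkipSimulation RC RA LC LA (Relation.Comp B₁ B₂) := by
  rintro c a ⟨b, hcb, hba⟩
  obtain ⟨hLcb, hpath₁⟩ := h₁ c b hcb
  obtain ⟨hLba, hpath₂⟩ := h₂ b a hba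
  refine ⟨hLcb.trans hLba, fun σ hσ hσ0 => ?_⟩
  obtain ⟨δ, hδ, hδ0, hσδ⟩ := hpath₁ σ hσ hσ0
  obtain ⟨ε, hε, hε0, hδε⟩ := hpath₂ δ hδ hδ0
  exact ⟨ε, hε, hε0, hσδ.comp hδε⟩

section Sum

variable {C A : Type u} {Lbl : Type v} {RC : C → C → Prop} {RA : A → A → Prop}

theorem FullPath.sumRel_inl {σ : ℕ → C ⊕ A} (hσ : FullPath (SumRel RC RA) σ) {c : C}
    (h0 : σ 0 = .inl c) : ∃ σC, σ = Sum.inl ∘ σC ∧ FullPath RC σC ∧ σC 0 = c := by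
  obtain ⟨σC, rfl⟩ := hσ.exists_eq_comp (by rintro _ (s | s) h; exacts [⟨s, rfl⟩, h.elim]) h0
  exact ⟨σC, rfl, hσ, Sum.inl_injective h0⟩

theorem FullPath.sumRel_inr {σ : ℕ → C ⊕ A} (hσ : FullPath (SumRel RC RA) σ) {a : A}
    (h0 : σ 0 = .inr a) : ∃ σA, σ = Sum.inr ∘ σA ∧ FullPath RA σA ∧ σA 0 = a := by
  obtain ⟨σA, rfl⟩ := hσ.exists_eq_comp (by rintro _ (s | s) h; exacts [h.elim, ⟨s, rfl⟩]) h0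
  exact ⟨σA, rfl, hσ, Sum.inr_injective h0⟩

theorem isSKS_sumRel_liftRel_iff {r : C → A} {LA : A → Lbl} {B : C → A → Prop} :
    IsSKS (SumRel RC RA) (SumLabel r LA) (LiftRel B) ↔ IsSkipSimulation RC RA (LA ∘ r) LA B := by
  constructor
  · intro h c a hca
    obtain ⟨hL, hpath⟩ := h (.inl c) (.inr a) hca
    refine ⟨hL, fun σ hσ hσ0 => ?_⟩
    obtain ⟨δ, hδ, hδ0, hσδ⟩ := hpath (Sum.inl ∘ σ) hσ (congrArg _ hσ0)
    obtain ⟨δA, rfl, hδA, hδA0⟩ := hδ.sumRel_inr hδ0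
    exact ⟨δA, hδA, hδA0, hσδ⟩
  · rintro h (c | _) (_ | a) hca <;> try exact hca.elim
    obtain ⟨hL, hpath⟩ := h c a hca
    refine ⟨hL, fun σ hσ hσ0 => ?_⟩
    obtain ⟨σC, rfl, hσC, hσC0⟩ := hσ.sumRel_inl hσ0
    obtain ⟨δ, hδ, hδ0, hσδ⟩ := hpath σC hσC hσC0
    exact ⟨Sum.inr ∘ δ, hδ, congrArg _ hδ0, hσδ⟩

end Sum

theorem skip_refinement_trans_general {C B' A : Type u} {Lbl : Type v}
    (RC : C → C → Prop) (RB : B' → B' → Prop) (RA : A → A → Prop)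
    (LA : A → Lbl) (r₁ : C → B') (r₂ : B' → A)
    (h₁ : SkipRefinement RC RB (fun b => LA (r₂ b)) r₁)
    (h₂ : SkipRefinement RB RA LA r₂) :
    SkipRefinement RC RA LA (r₂ ∘ r₁) := by
  obtain ⟨B₁, hr₁, h₁⟩ := h₁
  obtain ⟨B₂, hr₂, h₂⟩ := h₂
  refine ⟨Relation.Comp B₁ B₂, fun c => ⟨r₁ c, hr₁ c, hr₂ (r₁ c)⟩, ?_⟩
  rw [isSKS_sumRel_liftRel_iff] at h₁ h₂ ⊢
  exact h₁.comp h₂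

/-- Skipping refinement is transitive when the refinement maps
compose (the intermediate system is labeled compatibly via `r₂`):
if `M_C ≲_{r₁} M_B` and `M_B ≲_{r₂} M_A` then `M_C ≲_{r₂ ∘ r₁} M_A`. -/
theorem skip_refinement_trans {C B' A : Type u} {Lbl : Type v}
    (RC : C → C → Prop) (RB : B' → B' → Prop) (RA : A → A → Prop)
    (LA : A → Lbl) (r₁ : C → B') (r₂ : B' → A)
    (hRC : ∀ s, ∃ u, RC s u) (hRB : ∀ s, ∃ u, RB s u) (hRA : ∀ s, ∃ u, RA s u)
    (h₁ : SkipRefinement RC RB (fun b => LA (r₂ b)) r₁)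
    (h₂ : SkipRefinement RB RA LA r₂) :
    SkipRefinement RC RA LA (r₂ ∘ r₁) :=
  skip_refinement_trans_general RC RB RA LA r₁ r₂ h₁ h₂
end
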